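/- arXiv:2308.05293 — 2 statements merged into one kernel-verified Lean document; each statement's English description precedes it below -/
import Mathlib

section
/- Let K_n be the complete graph on vertices P_1, …, P_n with n ≥ 4, and let D = P_1 + ⋯ + P_n. Then for every vertex P, the rank of D − P equals 1. -/
/-!
On `K_n` the Laplacian is `Δ(f)(v) = n f(v) - Σ_w f(w)`. Firing `P` alone `E(P)` times absorbs
any effective `E` of degree at most one into `D - P`, so `r(D - P) ≥ 1`.

For `r(D - P) ≤ 1`, suppose `D - 2P - Q + Δ(f)` is effective and let `S` be the set of vertices
where `f` exceeds its minimum. At a minimizer `u` of `f` every vertex of `S` lowers `Δ(f)(u)` by at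
least one, so the coefficient of `u` in `D - 2P - Q` is at least `|S|`. Coefficients `-1` at `P`
and `0` at `Q` force `P, Q ∈ S`, and then a minimizer would need coefficient at least `2`, while
all remaining coefficients are `1`.
-/

open scoped Classical

namespace GraphDiv

variable {V : Type*}

/-- The Laplacian divisor of an integer-valued function on the vertices. -/
noncomputable def lap (G : SimpleGraph V) [Fintype V] (f : V → ℤ) : V → ℤ :=
  fun P => ∑ Q : V, if G.Adj P Q then f P - f Q else 0

/-- Linear equivalence of divisors: `D ∼ D'` iff `D - D' = Δ(f)` for some `f`. -/
def LinEquiv (G : SimpleGraph V) [Fintype V] (D D' : V → ℤ) : Prop :=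
  ∃ f : V → ℤ, D - D' = lap G f

/-- A divisor is effective if all its coefficients are nonnegative. -/
def Effective (D : V → ℤ) : Prop := ∀ P, 0 ≤ D P

/-- The degree of a divisor. -/
def degDiv [Fintype V] (D : V → ℤ) : ℤ := ∑ P : V, D P

/-- The complete linear system of a divisor. -/
def linSys (G : SimpleGraph V) [Fintype V] (D : V → ℤ) : Set (V → ℤ) :=
  {E | Effective E ∧ LinEquiv G E D}

/-- `RankEq G D r` says the Baker–Norine rank of `D` equals `r`. -/
def RankEq (G : SimpleGraph V) [Fintype V] (D : V → ℤ) (r : ℤ) : Prop :=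
  -1 ≤ r ∧
  (∀ E : V → ℤ, Effective E → degDiv E ≤ r → (linSys G (D - E)).Nonempty) ∧
  ∃ E : V → ℤ, Effective E ∧ degDiv E = r + 1 ∧ linSys G (D - E) = ∅

/-- The divisor consisting of a single vertex. -/
noncomputable def unit (P : V) : V → ℤ := fun Q => if Q = P then 1 else 0

/-- A graph is 2-edge-connected if it is connected and stays connected
after removing any single edge. -/
def TwoEdgeConnected (G : SimpleGraph V) : Prop :=
  G.Connected ∧ ∀ v w : V, G.Adj v w → (G.deleteEdges {s(v, w)}).Connected

/-- Action of a graph automorphism on divisors. -/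
def divAct {G : SimpleGraph V} (σ : G ≃g G) (D : V → ℤ) : V → ℤ :=
  fun v => D (σ.symm v)

/-- Two vertices lie in the same orbit of a subgroup of automorphisms. -/
def vrel {G : SimpleGraph V} (H : Subgroup (G ≃g G)) (v w : V) : Prop :=
  ∃ σ ∈ H, σ v = w

/-- An edge is collapsed in the quotient: its endpoints lie in the same vertex orbit. -/
def Collapsed {G : SimpleGraph V} (H : Subgroup (G ≃g G)) (e : Sym2 V) : Prop :=
  ∃ a b : V, e = s(a, b) ∧ vrel H a b

/-- The quotient morphism `G → G/H` is harmonic: for every vertex `P`, the number of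
edges at `P` lying above a given non-collapsed edge-orbit incident to the class of `P`
is independent of the choice of that edge-orbit. -/
def QuotHarmonic (G : SimpleGraph V) (H : Subgroup (G ≃g G)) : Prop :=
  ∀ (P : V) (e₁ e₂ : Sym2 V), e₁ ∈ G.edgeSet → e₂ ∈ G.edgeSet →
    (∃ σ ∈ H, P ∈ Sym2.map (⇑σ) e₁) → (∃ σ ∈ H, P ∈ Sym2.map (⇑σ) e₂) →
    ¬ Collapsed H e₁ → ¬ Collapsed H e₂ →
    Nat.card {e : Sym2 V // e ∈ G.edgeSet ∧ P ∈ e ∧ ∃ σ ∈ H, Sym2.map (⇑σ) e = e₁} =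
    Nat.card {e : Sym2 V // e ∈ G.edgeSet ∧ P ∈ e ∧ ∃ σ ∈ H, Sym2.map (⇑σ) e = e₂}

/-- `H` acts harmonically on `G`: for every subgroup `Δ ≤ H` the quotient morphism
`G → G/Δ` is harmonic. -/
def HarmonicAction (G : SimpleGraph V) (H : Subgroup (G ≃g G)) : Prop :=
  ∀ Δ : Subgroup (G ≃g G), Δ ≤ H → QuotHarmonic G Δ

/-- `P` is a Galois point with respect to `|D|`. -/
def IsGaloisPoint (G : SimpleGraph V) [Fintype V] (D : V → ℤ) (P : V) : Prop :=
  RankEq G (D - unit P) 1 ∧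
  (∀ Q : V, RankEq G (D - unit P - unit Q) 0) ∧
  ∃ H : Subgroup (G ≃g G), (Nat.card H : ℤ) = degDiv D - 1 ∧
    (∃ v w : V, ¬ vrel H v w) ∧
    HarmonicAction G H ∧
    ∃ E₁ E₂ : V → ℤ, E₁ ≠ E₂ ∧ E₁ ∈ linSys G (D - unit P) ∧ E₂ ∈ linSys G (D - unit P) ∧
      ∀ σ ∈ H, divAct σ E₁ = E₁ ∧ divAct σ E₂ = E₂

/-- A divisor is `q`-reduced. -/
def QReduced (G : SimpleGraph V) [Fintype V] (q : V) (D : V → ℤ) : Prop :=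
  (∀ P : V, P ≠ q → 0 ≤ D P) ∧
  ∀ S : Finset V, S.Nonempty → q ∉ S →
    ∃ P ∈ S, D P < (((G.neighborFinset P).filter (fun Q => Q ∉ S)).card : ℤ)

/-- The wheel graph on `m + 1` vertices: hub `none` and rim `some i` for `i : Fin m`,
with the rim a cycle via `i ↦ i + 1 (mod m)`. -/
def wheel (m : ℕ) : SimpleGraph (Option (Fin m)) where
  Adj v w :=
    match v, w with
    | none, none => False
    | none, some _ => True
    | some _, none => True
    | some i, some j => i ≠ j ∧ ((i.val + 1) % m = j.val ∨ (j.val + 1) % m = i.val)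
  symm := ⟨by
    intro v w h
    cases v <;> cases w <;> simp_all <;> tauto⟩
  loopless := ⟨by intro v; cases v <;> simp⟩

/-- The 4-cycle `P₁P₂P₃P₄` with the chord `P₁P₃` (vertices `0,1,2,3`). -/
def g4 : SimpleGraph (Fin 4) :=
  SimpleGraph.fromRel (fun v w =>
    (v = 0 ∧ w = 1) ∨ (v = 1 ∧ w = 2) ∨ (v = 2 ∧ w = 3) ∨ (v = 3 ∧ w = 0) ∨ (v = 0 ∧ w = 2))

end GraphDiv

open Finset

namespace GraphDiv

variable {V : Type*}

@[simp]
lemma unit_self (P : V) : unit P P = 1 := if_pos rfl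

@[simp]
lemma unit_of_ne {P Q : V} (h : Q ≠ P) : unit P Q = 0 := if_neg h

lemma effective_unit (P : V) : Effective (unit P) := fun Q => by
  unfold unit
  split_ifs <;> norm_num

lemma Effective.add {D D' : V → ℤ} (hD : Effective D) (hD' : Effective D') :
    Effective (D + D') :=
  fun P => add_nonneg (hD P) (hD' P)

variable [Fintype V]

lemma degDiv_add (D D' : V → ℤ) : degDiv (D + D') = degDiv D + degDiv D' :=
  sum_add_distrib

lemma sum_unit (P : V) : ∑ Q, unit P Q = 1 := by
  simp [unit]

lemma degDiv_unit (P : V) : degDiv (unit P) = 1 := sum_unit P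

lemma Effective.add_le_degDiv {E : V → ℤ} (hE : Effective E) {v w : V} (hvw : v ≠ w) :
    E v + E w ≤ degDiv E := by
  rw [← sum_pair hvw]
  exact sum_le_sum_of_subset_of_nonneg (subset_univ _) fun u _ _ => hE u

lemma add_lap_mem_linSys (G : SimpleGraph V) {D : V → ℤ} {f : V → ℤ}
    (h : Effective (D + lap G f)) : D + lap G f ∈ linSys G D :=
  ⟨h, f, add_sub_cancel_left D _⟩

lemma lap_top_apply (f : V → ℤ) (v : V) :
    lap ⊤ f v = Fintype.card V * f v - ∑ w, f w := by
  calc lap ⊤ f v = ∑ w, (f v - f w) := sum_congr rfl fun w _ => by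
        split_ifs with h
        · rfl
        · simp only [SimpleGraph.top_adj, not_not] at h
          simp [h]
    _ = _ := by simp [sum_sub_distrib, card_univ]

lemma lap_le_neg_card_of_isMin (G : SimpleGraph V) (f : V → ℤ) {v : V}
    (hv : ∀ w, f v ≤ f w) :
    lap G f v ≤ -(#{w | G.Adj v w ∧ f v < f w} : ℤ) := by
  rw [card_filter, Nat.cast_sum, ← sum_neg_distrib]
  refine sum_le_sum fun w _ => ?_
  have := hv w
  by_cases hadj : G.Adj v w <;> by_cases hlt : f v < f w <;> simp [hadj, hlt] <;> omega

lemma lap_top_le_neg_card_of_isMin (f : V → ℤ) {v : V} (hv : ∀ w, f v ≤ f w) :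
    lap ⊤ f v ≤ -(#{w | f v < f w} : ℤ) := by
  convert lap_le_neg_card_of_isMin ⊤ f hv using 4
  ext w
  simp only [mem_filter, mem_univ, true_and, SimpleGraph.top_adj, iff_and_self]
  exact fun hlt heq => hlt.ne (congrArg f heq)

lemma nonempty_linSys_top_sub_unit_sub [Nontrivial V] (P : V) {E : V → ℤ}
    (hE : Effective E) (hdeg : degDiv E ≤ 1) :
    (linSys ⊤ ((fun _ => 1) - unit P - E)).Nonempty := by
  refine ⟨_, add_lap_mem_linSys ⊤ (f := E P • unit P) fun v => ?_⟩
  have hcard : 2 ≤ Fintype.card V := Fintype.one_lt_card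
  simp only [Pi.add_apply, Pi.sub_apply, Pi.smul_apply, lap_top_apply, smul_eq_mul, ← mul_sum,
    sum_unit]
  by_cases hv : v = P
  · subst hv
    simp only [unit_self]
    nlinarith [hE v, hcard]
  · have := hE.add_le_degDiv hv
    simp only [unit_of_ne hv]
    linarith

lemma linSys_top_sub_unit_sub_unit_add_unit_eq_empty {P Q : V} (hQP : Q ≠ P) :
    linSys ⊤ ((fun _ => 1) - unit P - (unit P + unit Q)) = ∅ := by
  refine Set.eq_empty_of_forall_notMem fun E ⟨hE, f, hf⟩ => ?_
  have : Nonempty V := ⟨P⟩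
  obtain ⟨v, hv⟩ := Finite.exists_min f
  set S : Finset V := {w | f v < f w}
  have hmin : ∀ u ∉ S, (#S : ℤ) ≤ 1 - unit P u - (unit P u + unit Q u) := by
    intro u hu
    have hfu : f u = f v := by
      simp only [S, mem_filter, mem_univ, true_and, not_lt] at hu
      exact le_antisymm hu (hv u)
    have hlap := lap_top_le_neg_card_of_isMin f (v := u) (fun w => hfu ▸ hv w)
    have hEu := congrFun hf u
    simp only [Pi.sub_apply, Pi.add_apply] at hEu
    rw [hfu] at hlap
    linarith [hE u]
  have hP : P ∈ S := by
    by_contra h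
    have := hmin P h
    simp only [unit_self, unit_of_ne hQP.symm] at this
    omega
  have hQ : Q ∈ S := by
    by_contra h
    have hle := hmin Q h
    have hpos := card_pos.mpr ⟨P, hP⟩
    simp only [unit_self, unit_of_ne hQP] at hle
    omega
  have hvS : v ∉ S := by simp [S]
  have htwo : 2 ≤ #S := by
    simpa [card_pair hQP.symm] using card_le_card (insert_subset hP (singleton_subset_iff.mpr hQ))
  have hle := hmin v hvS
  rw [unit_of_ne (ne_of_mem_of_not_mem hP hvS).symm,
    unit_of_ne (ne_of_mem_of_not_mem hQ hvS).symm] at hle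
  omega

end GraphDiv

open GraphDiv in
/-- On `K_n` (`n ≥ 4`), `r(D - P) = 1` for every vertex `P`. -/
theorem stmt5 (n : ℕ) (hn : 4 ≤ n) (P : Fin n) :
    RankEq (⊤ : SimpleGraph (Fin n)) ((fun _ => 1) - unit P) 1 := by
  have : Nontrivial (Fin n) := Fin.nontrivial_iff_two_le.mpr (by omega)
  obtain ⟨Q, hQP⟩ := exists_ne P
  refine ⟨by norm_num, fun E hE hdeg => nonempty_linSys_top_sub_unit_sub P hE hdeg,
    unit P + unit Q, (effective_unit P).add (effective_unit Q), ?_,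
    linSys_top_sub_unit_sub_unit_add_unit_eq_empty hQP⟩
  rw [degDiv_add, degDiv_unit, degDiv_unit]
end

section
/- Let W_n be the wheel graph on vertices P_1, …, P_n with n ≥ 5, where P_1 is the hub. Then the linear system |(n−1)P_1 − 2P_2| is empty; that is, there is no f : V(W_n) → ℤ such that Δ(f) + (n−1)P_1 − 2P_2 is effective. -/
open scoped Classical

/-!
Subtracting `Δ(1_{P₁})` turns `(n-1)P₁ - 2P₂` into the divisor `D₀` that is `0` at the hub, `-1` at
`P₂` and `1` at the other rim vertices, so it suffices that `D₀ + Δh` is never effective. At a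
vertex where `h` is minimal, `Δh` is at most minus the number of neighbours where `h` is larger.
If `P₂` is a minimum, `D₀ + Δh` is negative at `P₂`; if the hub is one but `P₂` is not, it is
negative at the hub. Otherwise the minima lie on the rim away from `P₂`, so going around the rim
one finds a minimum whose successor is not one; the hub is not one either, so `Δh ≤ -2` there
while `D₀ = 1`.
-/

theorem Fin.exists_and_not_add_one {n : ℕ} {p : Fin (n + 1) → Prop} {j : Fin (n + 1)}
    (hj : p j) (h0 : ¬ p 0) : ∃ i, p i ∧ ¬ p (i + 1) := by
  classical
  obtain ⟨i, hi, hmax⟩ :=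
    Finset.exists_max_image (Finset.univ.filter p) id
      ⟨j, Finset.mem_filter.2 ⟨Finset.mem_univ j, hj⟩⟩
  refine ⟨i, (Finset.mem_filter.1 hi).2, fun hi1 => h0 ?_⟩
  have hlast : i = Fin.last n :=
    Fin.add_one_le_iff.1 (hmax _ (Finset.mem_filter.2 ⟨Finset.mem_univ _, hi1⟩))
  rwa [hlast, Fin.last_add_one] at hi1

namespace GraphDiv

section Laplacian

variable {V : Type*} [Fintype V] (G : SimpleGraph V)

theorem lap_add (f g : V → ℤ) : lap G (f + g) = lap G f + lap G g := by
  ext P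
  simp only [lap, Pi.add_apply, ← Finset.sum_add_distrib]
  refine Finset.sum_congr rfl fun Q _ => ?_
  split_ifs <;> ring

theorem lap_le_neg_card_of_forall_le {f : V → ℤ} {v : V} (hv : ∀ w, f v ≤ f w) (T : Finset V)
    (hT : ∀ w ∈ T, G.Adj v w ∧ f v < f w) : lap G f v ≤ -T.card := by
  calc lap G f v ≤ ∑ w : V, if w ∈ T then -1 else 0 := by
        refine Finset.sum_le_sum fun w _ => ?_
        by_cases hw : w ∈ T
        · obtain ⟨hadj, hlt⟩ := hT w hw
          simp only [hadj, hw, if_true]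
          omega
        · have := hv w
          split_ifs <;> omega
    _ = -T.card := by simp [Finset.sum_ite_mem]

end Laplacian

section Wheel

theorem wheel_adj_some_add_one {n : ℕ} (hn : 1 ≤ n) (i : Fin (n + 1)) :
    (wheel (n + 1)).Adj (some i) (some (i + 1)) := by
  have hval := Fin.val_add_one i
  refine ⟨fun h => ?_, Or.inl ?_⟩
  · have hi := congrArg Fin.val h
    split_ifs at hval with hlast
    · have := congrArg Fin.val hlast
      rw [Fin.val_last] at this
      omega
    · omega
  · rw [hval]
    split_ifs with hlast
    · simp [hlast]
    · exact Nat.mod_eq_of_lt (by have := Fin.val_lt_last hlast; omega)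

theorem lap_wheel_unit_none_none (m : ℕ) : lap (wheel m) (unit none) none = m := by
  simp [lap, unit, Fintype.sum_option, wheel]

theorem lap_wheel_unit_none_some {m : ℕ} (i : Fin m) : lap (wheel m) (unit none) (some i) = -1 := by
  simp [lap, unit, Fintype.sum_option, wheel]

/-- `(N-1)P₁ - 2P₂ - Δ(1_{P₁})` on `W_N`, where `N = n + 2`. -/
def wheelRimDiv (n : ℕ) : Option (Fin (n + 1)) → ℤ
  | none => 0
  | some i => if i = 0 then -1 else 1

theorem not_effective_wheelRimDiv_add_lap (n : ℕ) (h : Option (Fin (n + 1)) → ℤ) :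
    ¬ Effective (wheelRimDiv n + lap (wheel (n + 1)) h) := by
  intro heff
  obtain ⟨v, -, hv⟩ := Finset.exists_min_image Finset.univ h Finset.univ_nonempty
  replace hv : ∀ w, h v ≤ h w := fun w => hv w (Finset.mem_univ w)
  have hmin : ∀ {w}, h w = h v → ∀ u, h w ≤ h u := fun hw u => hw ▸ hv u
  by_cases hP₂ : h (some 0) = h v
  · have hlap := lap_le_neg_card_of_forall_le (wheel (n + 1)) (hmin hP₂) ∅ (by simp)
    have := heff (some 0)
    simp only [Pi.add_apply, wheelRimDiv, if_true] at this
    simp only [Finset.card_empty, CharP.cast_eq_zero, neg_zero] at hlap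
    omega
  by_cases hhub : h none = h v
  · have hlap := lap_le_neg_card_of_forall_le (wheel (n + 1)) (hmin hhub) {some 0} <| by
      simp only [Finset.mem_singleton, forall_eq]
      exact ⟨trivial, lt_of_le_of_ne (hmin hhub _) (by omega)⟩
    have := heff none
    simp only [Pi.add_apply, wheelRimDiv] at this
    simp only [Finset.card_singleton, Nat.cast_one] at hlap
    omega
  obtain ⟨i, hi, hi1⟩ : ∃ i, h (some i) = h v ∧ h (some (i + 1)) ≠ h v := by
    cases v with
    | none => exact absurd rfl hhub
    | some j => exact Fin.exists_and_not_add_one (p := fun i => h (some i) = h (some j)) rfl hP₂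
  have hi0 : i ≠ 0 := by rintro rfl; exact hP₂ hi
  have hn : 1 ≤ n := by have := Fin.pos_of_ne_zero hi0; have := i.is_le; omega
  have hlap := lap_le_neg_card_of_forall_le (wheel (n + 1)) (hmin hi) {none, some (i + 1)} <| by
    simp only [Finset.mem_insert, Finset.mem_singleton, forall_eq_or_imp, forall_eq]
    exact ⟨⟨trivial, lt_of_le_of_ne (hmin hi _) (by omega)⟩,
      wheel_adj_some_add_one hn i, lt_of_le_of_ne (hmin hi _) (by omega)⟩
  have := heff (some i)
  simp only [Pi.add_apply, wheelRimDiv, hi0, if_false] at this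
  rw [Finset.card_pair (by simp)] at hlap
  omega

end Wheel

end GraphDiv

open GraphDiv in
/-- Here `n = m + 1` and `P₂ = some 0`. -/
theorem stmt8 (m : ℕ) (hm : 4 ≤ m) :
    ¬ ∃ f : Option (Fin m) → ℤ,
      Effective (lap (wheel m) f +
        fun v => match v with
          | none => (m : ℤ)
          | some i => if i = (⟨0, by omega⟩ : Fin m) then -2 else 0) := by
  rintro ⟨f, hf⟩
  obtain ⟨n, rfl⟩ : ∃ n, m = n + 1 := ⟨m - 1, by omega⟩
  refine not_effective_wheelRimDiv_add_lap n (f + unit none) fun v => ?_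
  have hfv := hf v
  rw [Pi.add_apply, lap_add, Pi.add_apply]
  cases v with
  | none =>
    simp only [Pi.add_apply, wheelRimDiv, lap_wheel_unit_none_none, Nat.cast_add,
      Nat.cast_one] at hfv ⊢
    omega
  | some i =>
    simp only [Pi.add_apply, wheelRimDiv, lap_wheel_unit_none_some, Fin.zero_eta] at hfv ⊢
    split_ifs at hfv ⊢ <;> omega
end
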